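/- Let (F_k) be a filtration, and let (v_k), (θ_k), (η_k), (χ_k) be nonnegative adapted sequences with Σ_k η_k < ∞ and Σ_k χ_k < ∞ almost surely, satisfying E[v_{k+1} | F_k] + θ_k ≤ (1 + χ_k) v_k + η_k a.s. for all k. Then Σ_k θ_k < ∞ a.s. and v_k converges a.s. to a nonnegative random variable (Robbins–Siegmund lemma). -/

import Mathlib

open MeasureTheory Filter Finset Topology

namespace RobbinsSiegmundAux

variable {Ω : Type*}

/-- Discount factor `∏_{j<k} (1+c_j)⁻¹`. -/
noncomputable def al (c : ℕ → Ω → ℝ) (k : ℕ) (ω : Ω) : ℝ :=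
  ∏ j ∈ Finset.range k, (1 + c j ω)⁻¹

/-- Indicator of the event that the partial sum of `e` up to `k` is `≤ n`. -/
noncomputable def ind (e : ℕ → Ω → ℝ) (n k : ℕ) (ω : Ω) : ℝ :=
  if ∑ j ∈ Finset.range (k + 1), e j ω ≤ (n : ℝ) then 1 else 0

/-- The stopped auxiliary supermartingale. -/
noncomputable def N (x t e c : ℕ → Ω → ℝ) (n : ℕ) : ℕ → Ω → ℝ
  | 0 => x 0
  | k + 1 => fun ω => N x t e c n k ω +
      ind e n k ω * (al c (k + 1) ω * x (k + 1) ω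
        + al c (k + 1) ω * (t k ω - e k ω) - al c k ω * x k ω)

/-- Closed form for `N` before the stopping time. -/
noncomputable def cl (x t e c : ℕ → Ω → ℝ) (m : ℕ) (ω : Ω) : ℝ :=
  al c m ω * x m ω + ∑ j ∈ Finset.range m, al c (j + 1) ω * (t j ω - e j ω)

theorem al_zero (c : ℕ → Ω → ℝ) (ω : Ω) : al c 0 ω = 1 := by simp [al]

theorem al_succ (c : ℕ → Ω → ℝ) (k : ℕ) (ω : Ω) :
    al c (k + 1) ω = al c k ω * (1 + c k ω)⁻¹ := Finset.prod_range_succ _ _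

theorem al_pos {c : ℕ → Ω → ℝ} {ω : Ω} (hc : ∀ j, 0 ≤ c j ω) (k : ℕ) :
    0 < al c k ω := by
  refine Finset.prod_pos fun j _ => inv_pos.2 (by linarith [hc j])

theorem al_le_one {c : ℕ → Ω → ℝ} {ω : Ω} (hc : ∀ j, 0 ≤ c j ω) (k : ℕ) :
    al c k ω ≤ 1 := by
  refine Finset.prod_le_one (fun j _ => (inv_pos.2 (by linarith [hc j] : (0:ℝ) < 1 + c j ω)).le)
    (fun j _ => ?_)
  rw [← one_div]
  exact div_le_one_of_le₀ (by linarith [hc j]) (by linarith [hc j])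

theorem al_succ_mul {c : ℕ → Ω → ℝ} {ω : Ω} (k : ℕ) (hpos : 0 < 1 + c k ω) :
    al c (k + 1) ω * (1 + c k ω) = al c k ω := by
  rw [al_succ, mul_assoc, inv_mul_cancel₀ (ne_of_gt hpos), mul_one]

theorem N_eq_cl {x t e c : ℕ → Ω → ℝ} {n : ℕ} {ω : Ω} :
    ∀ {k : ℕ}, (∀ j < k, ∑ i ∈ Finset.range (j + 1), e i ω ≤ (n : ℝ)) →
      N x t e c n k ω = cl x t e c k ω := by
  intro k
  induction k with
  | zero => intro _; simp [N, cl, al]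
  | succ k ih =>
    intro hcond
    have h1 : ind e n k ω = 1 := if_pos (hcond k k.lt_succ_self)
    have h2 := ih (fun j hj => hcond j (hj.trans k.lt_succ_self))
    show N x t e c n k ω + ind e n k ω * _ = _
    rw [h1, h2]
    simp only [cl, Finset.sum_range_succ]
    ring

theorem N_freeze {x t e c : ℕ → Ω → ℝ} {n : ℕ} {ω : Ω} (he : ∀ i, 0 ≤ e i ω) {j0 : ℕ}
    (hfail : ¬ (∑ i ∈ Finset.range (j0 + 1), e i ω ≤ (n : ℝ))) :
    ∀ k, j0 ≤ k → N x t e c n k ω = N x t e c n j0 ω := by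
  intro k hk
  induction k, hk using Nat.le_induction with
  | base => rfl
  | succ k hk ih =>
    have h0 : ind e n k ω = 0 := by
      refine if_neg fun h => hfail (le_trans ?_ h)
      exact Finset.sum_le_sum_of_subset_of_nonneg
        (Finset.range_subset_range.2 (by omega)) (fun i _ _ => he i)
    show N x t e c n k ω + ind e n k ω * _ = _
    rw [h0, zero_mul, add_zero, ih]

theorem N_rep {x t e c : ℕ → Ω → ℝ} {n : ℕ} {ω : Ω} (he : ∀ i, 0 ≤ e i ω) (k : ℕ) :
    ∃ m ≤ k, (∀ j < m, ∑ i ∈ Finset.range (j + 1), e i ω ≤ (n : ℝ)) ∧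
      N x t e c n k ω = cl x t e c m ω := by
  by_cases h : ∀ j < k, ∑ i ∈ Finset.range (j + 1), e i ω ≤ (n : ℝ)
  · exact ⟨k, le_rfl, h, N_eq_cl h⟩
  · push_neg at h
    obtain ⟨j, hjk, hj⟩ := h
    have hex : ∃ j, ¬ (∑ i ∈ Finset.range (j + 1), e i ω ≤ (n : ℝ)) := ⟨j, not_le.2 hj⟩
    have hspec := Nat.find_spec hex
    have hmin : ∀ i < Nat.find hex, ∑ l ∈ Finset.range (i + 1), e l ω ≤ (n : ℝ) :=
      fun i hi => not_not.1 (Nat.find_min hex hi)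
    have hj0k : Nat.find hex ≤ k := le_trans (Nat.find_le (not_le.2 hj)) hjk.le
    exact ⟨Nat.find hex, hj0k, hmin, by rw [N_freeze he hspec k hj0k, N_eq_cl hmin]⟩

theorem N_ge {x t e c : ℕ → Ω → ℝ} {n : ℕ} {ω : Ω} (hx : ∀ i, 0 ≤ x i ω)
    (ht : ∀ i, 0 ≤ t i ω) (he : ∀ i, 0 ≤ e i ω) (hc : ∀ i, 0 ≤ c i ω) (k : ℕ) :
    -(n : ℝ) ≤ N x t e c n k ω := by
  obtain ⟨m, _, hcond, hrep⟩ := N_rep (x := x) (t := t) (c := c) he k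
  rw [hrep, cl]
  have h1 : 0 ≤ al c m ω * x m ω := mul_nonneg (al_pos hc m).le (hx m)
  have hsum_e : ∑ j ∈ Finset.range m, e j ω ≤ (n : ℝ) := by
    cases m with
    | zero => simp
    | succ m' => exact hcond m' m'.lt_succ_self
  have key : -(n : ℝ) ≤ ∑ j ∈ Finset.range m, al c (j + 1) ω * (t j ω - e j ω) := by
    have h2 : ∑ j ∈ Finset.range m, (-(e j ω)) ≤
        ∑ j ∈ Finset.range m, al c (j + 1) ω * (t j ω - e j ω) := by
      refine Finset.sum_le_sum fun j _ => ?_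
      have ha1 := al_le_one hc (j + 1)
      have ha0 := (al_pos hc (j + 1)).le
      nlinarith [ht j, he j]
    have h3 : -(n : ℝ) ≤ ∑ j ∈ Finset.range m, (-(e j ω)) := by
      rw [Finset.sum_neg_distrib]
      linarith
    linarith
  linarith

theorem pathwise {x t e c : ℕ → ℝ} (hx : ∀ k, 0 ≤ x k) (ht : ∀ k, 0 ≤ t k)
    (he : ∀ k, 0 ≤ e k) (hc : ∀ k, 0 ≤ c k) (hes : Summable e) (hcs : Summable c)
    {L : ℝ}
    (hconv : Tendsto (fun k => (∏ j ∈ Finset.range k, (1 + c j)⁻¹) * x k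
      + ∑ j ∈ Finset.range k, (∏ i ∈ Finset.range (j + 1), (1 + c i)⁻¹) * (t j - e j))
      atTop (𝓝 L)) :
    Summable t ∧ ∃ A, 0 ≤ A ∧ Tendsto x atTop (𝓝 A) := by
  set P : ℕ → ℝ := fun k => ∏ j ∈ Finset.range k, (1 + c j) with hPdef
  set a : ℕ → ℝ := fun k => ∏ j ∈ Finset.range k, (1 + c j)⁻¹ with hadef
  have haP : ∀ k, a k = (P k)⁻¹ := fun k => Finset.prod_inv_distrib _
  have hP1 : ∀ k, 1 ≤ P k := by
    intro k
    simp only [hPdef]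
    have : ∀ j ∈ Finset.range k, (1:ℝ) ≤ 1 + c j := fun j _ => by linarith [hc j]
    calc (1:ℝ) = ∏ _j ∈ Finset.range k, (1:ℝ) := by simp
      _ ≤ ∏ j ∈ Finset.range k, (1 + c j) :=
          Finset.prod_le_prod (fun j _ => zero_le_one) this
  have hPpos : ∀ k, 0 < P k := fun k => lt_of_lt_of_le one_pos (hP1 k)
  have hapos : ∀ k, 0 < a k := fun k => by rw [haP]; exact inv_pos.2 (hPpos k)
  have hale : ∀ k, a k ≤ 1 := fun k => by
    rw [haP, ← one_div]
    exact div_le_one_of_le₀ (hP1 k) (hPpos k).le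
  set C := Real.exp (∑' j, c j) with hCdef
  have hPC : ∀ k, P k ≤ C := by
    intro k
    calc P k ≤ ∏ j ∈ Finset.range k, Real.exp (c j) :=
          Finset.prod_le_prod (fun j _ => by linarith [hc j])
            (fun j _ => by linarith [Real.add_one_le_exp (c j)])
      _ = Real.exp (∑ j ∈ Finset.range k, c j) := (Real.exp_sum _ _).symm
      _ ≤ C := Real.exp_le_exp.2 (hcs.sum_le_tsum _ (fun j _ => hc j))
  have hae : Summable fun j => a (j + 1) * e j := by
    refine Summable.of_nonneg_of_le (fun j => mul_nonneg (hapos _).le (he j))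
      (fun j => mul_le_of_le_one_left (he j) (hale _)) hes
  set G : ℕ → ℝ := fun k => a k * x k + ∑ j ∈ Finset.range k, a (j + 1) * t j with hGdef
  have hGconv : Tendsto G atTop (𝓝 (L + ∑' j, a (j + 1) * e j)) := by
    have hGeq : G = fun k => (a k * x k
        + ∑ j ∈ Finset.range k, a (j + 1) * (t j - e j))
        + ∑ j ∈ Finset.range k, a (j + 1) * e j := by
      funext k
      simp only [hGdef, mul_sub, Finset.sum_sub_distrib]
      ring
    rw [hGeq]
    exact hconv.add hae.hasSum.tendsto_sum_nat
  have hat : Summable fun j => a (j + 1) * t j := by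
    obtain ⟨B, hB⟩ := hGconv.bddAbove_range
    refine summable_of_sum_range_le (c := B)
      (fun j => mul_nonneg (hapos _).le (ht j)) (fun k => ?_)
    have h1 : ∑ j ∈ Finset.range k, a (j + 1) * t j ≤ G k :=
      le_add_of_nonneg_left (mul_nonneg (hapos _).le (hx _))
    exact h1.trans (hB (Set.mem_range_self k))
  constructor
  · refine Summable.of_nonneg_of_le ht (fun j => ?_) (hat.mul_left C)
    have h1 : t j = P (j + 1) * (a (j + 1) * t j) := by
      rw [haP, ← mul_assoc, mul_inv_cancel₀ (hPpos _).ne', one_mul]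
    calc t j = P (j + 1) * (a (j + 1) * t j) := h1
      _ ≤ C * (a (j + 1) * t j) :=
          mul_le_mul_of_nonneg_right (hPC _) (mul_nonneg (hapos _).le (ht _))
  · have hTconv := hat.hasSum.tendsto_sum_nat
    have hax : Tendsto (fun k => a k * x k) atTop
        (𝓝 ((L + ∑' j, a (j + 1) * e j) - ∑' j, a (j + 1) * t j)) := by
      have : (fun k => a k * x k)
          = fun k => G k - ∑ j ∈ Finset.range k, a (j + 1) * t j := by
        funext k; simp [hGdef]
      rw [this]
      exact hGconv.sub hTconv
    have hA0 : 0 ≤ (L + ∑' j, a (j + 1) * e j) - ∑' j, a (j + 1) * t j :=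
      ge_of_tendsto' hax (fun k => mul_nonneg (hapos _).le (hx _))
    have hPmono : Monotone P := by
      refine monotone_nat_of_le_succ fun k => ?_
      have : P (k + 1) = P k * (1 + c k) := Finset.prod_range_succ _ _
      nlinarith [hPpos k, hc k]
    have hPbdd : BddAbove (Set.range P) := by
      refine ⟨C, ?_⟩
      rintro y ⟨k, rfl⟩
      exact hPC k
    have hPconv : Tendsto P atTop (𝓝 (⨆ k, P k)) := tendsto_atTop_ciSup hPmono hPbdd
    have hQ0 : 0 ≤ ⨆ k, P k := le_trans zero_le_one (le_trans (hP1 0) (le_ciSup hPbdd 0))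
    refine ⟨_, mul_nonneg hA0 hQ0, ?_⟩
    have hxeq : x = fun k => (a k * x k) * P k := by
      funext k
      rw [haP, mul_comm (P k)⁻¹ (x k), mul_assoc, inv_mul_cancel₀ (hPpos _).ne', mul_one]
    rw [hxeq]
    exact hax.mul hPconv

end RobbinsSiegmundAux

open RobbinsSiegmundAux

/-- Robbins–Siegmund lemma. -/
theorem robbins_siegmund
    {Ω : Type*} {m0 : MeasurableSpace Ω}
    (μ : Measure Ω) [IsProbabilityMeasure μ]
    (ℱ : Filtration ℕ m0)
    (v θ η χ : ℕ → Ω → ℝ)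
    (hv_nonneg : ∀ k, 0 ≤ᵐ[μ] v k)
    (hθ_nonneg : ∀ k, 0 ≤ᵐ[μ] θ k)
    (hη_nonneg : ∀ k, 0 ≤ᵐ[μ] η k)
    (hχ_nonneg : ∀ k, 0 ≤ᵐ[μ] χ k)
    (hv_adapted : Adapted ℱ v)
    (hθ_adapted : Adapted ℱ θ)
    (hη_adapted : Adapted ℱ η)
    (hχ_adapted : Adapted ℱ χ)
    (hv_int : ∀ k, Integrable (v k) μ)
    (hη_sum : ∀ᵐ ω ∂μ, Summable (fun k => η k ω))
    (hχ_sum : ∀ᵐ ω ∂μ, Summable (fun k => χ k ω))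
    (hineq : ∀ k, ∀ᵐ ω ∂μ,
      (μ[v (k + 1)|ℱ k]) ω + θ k ω ≤ (1 + χ k ω) * v k ω + η k ω) :
    (∀ᵐ ω ∂μ, Summable (fun k => θ k ω)) ∧
      ∃ V : Ω → ℝ, ∀ᵐ ω ∂μ,
        0 ≤ V ω ∧ Tendsto (fun k => v k ω) atTop (nhds (V ω)) := by
  classical
  set v' : ℕ → Ω → ℝ := fun k ω => max (v k ω) 0 with hv'def
  set θ' : ℕ → Ω → ℝ := fun k ω => max (θ k ω) 0 with hθ'def
  set η' : ℕ → Ω → ℝ := fun k ω => max (η k ω) 0 with hη'def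
  set χ' : ℕ → Ω → ℝ := fun k ω => max (χ k ω) 0 with hχ'def
  -- pointwise nonnegativity
  have hv'0 : ∀ k ω, 0 ≤ v' k ω := fun k ω => le_max_right _ _
  have hθ'0 : ∀ k ω, 0 ≤ θ' k ω := fun k ω => le_max_right _ _
  have hη'0 : ∀ k ω, 0 ≤ η' k ω := fun k ω => le_max_right _ _
  have hχ'0 : ∀ k ω, 0 ≤ χ' k ω := fun k ω => le_max_right _ _
  -- a.e. equal to the original processes
  have hv'ae : ∀ k, v' k =ᵐ[μ] v k := fun k => (hv_nonneg k).mono fun ω h => max_eq_left h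
  -- adaptedness
  have hv'ad : ∀ k, StronglyMeasurable[ℱ k] (v' k) :=
    fun k => ((Measurable.max (hv_adapted k)) measurable_const).stronglyMeasurable
  have hθ'ad : ∀ k, StronglyMeasurable[ℱ k] (θ' k) :=
    fun k => ((Measurable.max (hθ_adapted k)) measurable_const).stronglyMeasurable
  have hη'ad : ∀ k, StronglyMeasurable[ℱ k] (η' k) :=
    fun k => ((Measurable.max (hη_adapted k)) measurable_const).stronglyMeasurable
  have hχ'ad : ∀ k, StronglyMeasurable[ℱ k] (χ' k) :=
    fun k => ((Measurable.max (hχ_adapted k)) measurable_const).stronglyMeasurable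
  -- measurability of the discount factors
  have hmα : ∀ k j, j ≤ k + 1 → Measurable[ℱ k] (al χ' j) := by
    intro k j hj
    have : Measurable[ℱ k] fun ω => ∏ i ∈ Finset.range j, (1 + χ' i ω)⁻¹ := by
      refine Finset.measurable_prod _ fun i hi => ?_
      have hik : i ≤ k := by have := Finset.mem_range.1 hi; omega
      exact (measurable_const.add ((hχ'ad i).measurable.mono (ℱ.mono hik) le_rfl)).inv
    exact this
  -- measurability of the indicator
  have hmind : ∀ n k : ℕ, Measurable[ℱ k] (ind η' n k) := by
    intro n k
    have hs : MeasurableSet[ℱ k] {ω | ∑ j ∈ Finset.range (k + 1), η' j ω ≤ (n : ℝ)} := by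
      refine measurableSet_le (Finset.measurable_sum _ fun i hi => ?_) measurable_const
      have hik : i ≤ k := by have := Finset.mem_range.1 hi; omega
      exact (hη'ad i).measurable.mono (ℱ.mono hik) le_rfl
    exact Measurable.ite hs measurable_const measurable_const
  -- adaptedness of N
  have hNad : ∀ n k : ℕ, StronglyMeasurable[ℱ k] (N v' θ' η' χ' n k) := by
    intro n k
    induction k with
    | zero => exact hv'ad 0
    | succ k ih =>
      have h1 : Measurable[ℱ (k + 1)] (N v' θ' η' χ' n k) :=
        ih.measurable.mono (ℱ.mono k.le_succ) le_rfl
      have h2 : Measurable[ℱ (k + 1)] (ind η' n k) :=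
        (hmind n k).mono (ℱ.mono k.le_succ) le_rfl
      have h3 := hmα (k + 1) (k + 1) (by omega)
      have h4 := hmα (k + 1) k (by omega)
      have h5 : Measurable[ℱ (k + 1)] (v' (k + 1)) := (hv'ad (k + 1)).measurable
      have h6 : Measurable[ℱ (k + 1)] (v' k) :=
        (hv'ad k).measurable.mono (ℱ.mono k.le_succ) le_rfl
      have h7 : Measurable[ℱ (k + 1)] (θ' k) :=
        (hθ'ad k).measurable.mono (ℱ.mono k.le_succ) le_rfl
      have h8 : Measurable[ℱ (k + 1)] (η' k) :=
        (hη'ad k).measurable.mono (ℱ.mono k.le_succ) le_rfl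
      have : Measurable[ℱ (k + 1)] fun ω => N v' θ' η' χ' n k ω +
          ind η' n k ω * (al χ' (k + 1) ω * v' (k + 1) ω
            + al χ' (k + 1) ω * (θ' k ω - η' k ω) - al χ' k ω * v' k ω) :=
        h1.add (h2.mul (((h3.mul h5).add (h3.mul (h7.sub h8))).sub (h4.mul h6)))
      exact this.stronglyMeasurable
  have hv'int : ∀ k, Integrable (v' k) μ := fun k => (hv_int k).pos_part
  have hind01 : ∀ n k : ℕ, ∀ ω, 0 ≤ ind η' n k ω ∧ ind η' n k ω ≤ 1 := by
    intro n k ω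
    unfold RobbinsSiegmundAux.ind
    split <;> norm_num
  -- integrable pieces
  have hI1 : ∀ n k : ℕ,
      Integrable (fun ω => ind η' n k ω * al χ' (k + 1) ω * v' (k + 1) ω) μ := by
    intro n k
    refine Integrable.mono' (hv'int (k + 1)) ?_ (ae_of_all _ fun ω => ?_)
    · exact ((((hmind n k).mono (ℱ.le k) le_rfl).mul
        ((hmα k (k + 1) le_rfl).mono (ℱ.le k) le_rfl)).mul
          ((hv'ad (k + 1)).measurable.mono (ℱ.le (k + 1)) le_rfl)).aestronglyMeasurable
    · have hi := hind01 n k ω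
      have ha0 := (al_pos (fun j => hχ'0 j ω) (k + 1)).le
      have ha1 := al_le_one (fun j => hχ'0 j ω) (k + 1)
      have h0 : 0 ≤ ind η' n k ω * al χ' (k + 1) ω * v' (k + 1) ω :=
        mul_nonneg (mul_nonneg hi.1 ha0) (hv'0 _ _)
      rw [Real.norm_eq_abs, abs_of_nonneg h0]
      have hle1 : ind η' n k ω * al χ' (k + 1) ω ≤ 1 := mul_le_one₀ hi.2 ha0 ha1
      have := mul_le_mul_of_nonneg_right hle1 (hv'0 (k + 1) ω)
      linarith
  have hI2 : ∀ n k : ℕ,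
      Integrable (fun ω => ind η' n k ω * al χ' k ω * v' k ω) μ := by
    intro n k
    refine Integrable.mono' (hv'int k) ?_ (ae_of_all _ fun ω => ?_)
    · exact ((((hmind n k).mono (ℱ.le k) le_rfl).mul
        ((hmα k k (by omega)).mono (ℱ.le k) le_rfl)).mul
          ((hv'ad k).measurable.mono (ℱ.le k) le_rfl)).aestronglyMeasurable
    · have hi := hind01 n k ω
      have ha0 := (al_pos (fun j => hχ'0 j ω) k).le
      have ha1 := al_le_one (fun j => hχ'0 j ω) k
      have h0 : 0 ≤ ind η' n k ω * al χ' k ω * v' k ω :=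
        mul_nonneg (mul_nonneg hi.1 ha0) (hv'0 _ _)
      rw [Real.norm_eq_abs, abs_of_nonneg h0]
      have hle1 : ind η' n k ω * al χ' k ω ≤ 1 := mul_le_one₀ hi.2 ha0 ha1
      have := mul_le_mul_of_nonneg_right hle1 (hv'0 k ω)
      linarith
  have hI2' : ∀ k : ℕ, Integrable (fun ω => al χ' k ω * v' k ω) μ := by
    intro k
    refine Integrable.mono' (hv'int k) ?_ (ae_of_all _ fun ω => ?_)
    · exact (((hmα k k (by omega)).mono (ℱ.le k) le_rfl).mul
        ((hv'ad k).measurable.mono (ℱ.le k) le_rfl)).aestronglyMeasurable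
    · have ha0 := (al_pos (fun j => hχ'0 j ω) k).le
      have ha1 := al_le_one (fun j => hχ'0 j ω) k
      have h0 : 0 ≤ al χ' k ω * v' k ω := mul_nonneg ha0 (hv'0 _ _)
      rw [Real.norm_eq_abs, abs_of_nonneg h0]
      have := mul_le_mul_of_nonneg_right ha1 (hv'0 k ω)
      linarith
  have hI3 : ∀ n k : ℕ,
      Integrable (fun ω => ind η' n k ω * al χ' (k + 1) ω * η' k ω) μ := by
    intro n k
    refine Integrable.mono' (integrable_const (n : ℝ)) ?_ (ae_of_all _ fun ω => ?_)
    · exact ((((hmind n k).mono (ℱ.le k) le_rfl).mul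
        ((hmα k (k + 1) le_rfl).mono (ℱ.le k) le_rfl)).mul
          ((hη'ad k).measurable.mono (ℱ.le k) le_rfl)).aestronglyMeasurable
    · have ha0 := (al_pos (fun j => hχ'0 j ω) (k + 1)).le
      have ha1 := al_le_one (fun j => hχ'0 j ω) (k + 1)
      by_cases hcase : ∑ j ∈ Finset.range (k + 1), η' j ω ≤ (n : ℝ)
      · have hi : ind η' n k ω = 1 := if_pos hcase
        rw [hi, one_mul, Real.norm_eq_abs, abs_of_nonneg (mul_nonneg ha0 (hη'0 _ _))]
        have hs := Finset.single_le_sum (f := fun j => η' j ω)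
          (fun i _ => hη'0 i ω) (Finset.self_mem_range_succ k)
        have := mul_le_mul_of_nonneg_right ha1 (hη'0 k ω)
        linarith
      · have hi : ind η' n k ω = 0 := if_neg hcase
        rw [hi, zero_mul, zero_mul, norm_zero]
        positivity
  have hI4 : ∀ n k : ℕ,
      Integrable (fun ω => ind η' n k ω * al χ' (k + 1) ω * θ' k ω) μ := by
    intro n k
    have hgint : Integrable (fun ω => al χ' k ω * v' k ω
        + ind η' n k ω * al χ' (k + 1) ω * η' k ω + |(μ[v (k + 1)|ℱ k]) ω|) μ :=
      ((hI2' k).add (hI3 n k)).add integrable_condExp.abs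
    refine Integrable.mono' hgint ?_ ?_
    · exact ((((hmind n k).mono (ℱ.le k) le_rfl).mul
        ((hmα k (k + 1) le_rfl).mono (ℱ.le k) le_rfl)).mul
          ((hθ'ad k).measurable.mono (ℱ.le k) le_rfl)).aestronglyMeasurable
    · filter_upwards [hineq k, hθ_nonneg k, hη_nonneg k, hχ_nonneg k, hv_nonneg k]
        with ω h1 h2 h3 h4 h5
      simp only [Pi.zero_apply] at h2 h3 h4 h5
      have hθe : θ' k ω = θ k ω := max_eq_left h2
      have hηe : η' k ω = η k ω := max_eq_left h3
      have hχe : χ' k ω = χ k ω := max_eq_left h4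
      have hve : v' k ω = v k ω := max_eq_left h5
      have hi := hind01 n k ω
      have hA0 := al_pos (fun j => hχ'0 j ω) (k + 1)
      have hA1 := al_le_one (fun j => hχ'0 j ω) (k + 1)
      have hB0 := al_pos (fun j => hχ'0 j ω) k
      have hAB : al χ' (k + 1) ω * (1 + χ k ω) = al χ' k ω := by
        rw [← hχe]
        exact al_succ_mul k (by linarith [hχ'0 k ω])
      set i := ind η' n k ω
      set A := al χ' (k + 1) ω
      set B := al χ' k ω
      set E := (μ[v (k + 1)|ℱ k]) ω
      have h0 : 0 ≤ i * A * θ' k ω := mul_nonneg (mul_nonneg hi.1 hA0.le) (hθ'0 _ _)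
      rw [Real.norm_eq_abs, abs_of_nonneg h0, hθe, hηe, hve]
      have step1 : i * A * θ k ω ≤ i * A * ((1 + χ k ω) * v k ω + η k ω - E) := by
        refine mul_le_mul_of_nonneg_left ?_ (mul_nonneg hi.1 hA0.le)
        linarith
      have t1 : i * (A * (1 + χ k ω)) * v k ω ≤ B * v k ω := by
        rw [hAB]
        have h6 : i * B ≤ B := mul_le_of_le_one_left hB0.le hi.2
        have := mul_le_mul_of_nonneg_right h6 h5
        linarith
      have t2 : -(i * A * E) ≤ |E| := by
        have habs : |i * A * E| ≤ |E| := by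
          rw [abs_mul, abs_mul, abs_of_nonneg hi.1, abs_of_nonneg hA0.le]
          have h6 : i * A ≤ 1 := mul_le_one₀ hi.2 hA0.le hA1
          have := mul_le_mul_of_nonneg_right h6 (abs_nonneg E)
          linarith
        linarith [neg_abs_le (i * A * E), le_abs_self (i * A * E), abs_le.1 habs]
      calc i * A * θ k ω ≤ i * A * ((1 + χ k ω) * v k ω + η k ω - E) := step1
        _ = i * (A * (1 + χ k ω)) * v k ω + i * A * η k ω - i * A * E := by ring
        _ ≤ B * v k ω + i * A * η k ω + |E| := by linarith
  -- integrability of N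
  have hNint : ∀ n k : ℕ, Integrable (N v' θ' η' χ' n k) μ := by
    intro n k
    induction k with
    | zero => exact hv'int 0
    | succ k ih =>
      have heq : N v' θ' η' χ' n (k + 1) = fun ω =>
          (N v' θ' η' χ' n k ω + ind η' n k ω * al χ' (k + 1) ω * v' (k + 1) ω
            + ind η' n k ω * al χ' (k + 1) ω * θ' k ω)
          - (ind η' n k ω * al χ' (k + 1) ω * η' k ω
            + ind η' n k ω * al χ' k ω * v' k ω) := by
        funext ω
        show N v' θ' η' χ' n k ω + ind η' n k ω * _ = _
        ring
      rw [heq]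
      exact ((ih.add (hI1 n k)).add (hI4 n k)).sub ((hI3 n k).add (hI2 n k))
  -- the supermartingale property
  have hcondexp : ∀ n k : ℕ,
      μ[N v' θ' η' χ' n (k + 1)|ℱ k] ≤ᵐ[μ] N v' θ' η' χ' n k := by
    intro n k
    set g1 : Ω → ℝ := fun ω => ind η' n k ω * al χ' (k + 1) ω with hg1def
    set h1 : Ω → ℝ := fun ω => ind η' n k ω * al χ' (k + 1) ω * θ' k ω
      - ind η' n k ω * al χ' (k + 1) ω * η' k ω
      - ind η' n k ω * al χ' k ω * v' k ω with hh1def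
    have hg1sm : StronglyMeasurable[ℱ k] g1 :=
      ((hmind n k).mul (hmα k (k + 1) le_rfl)).stronglyMeasurable
    have hg1vint : Integrable (g1 * v' (k + 1)) μ := hI1 n k
    have hh1int : Integrable h1 μ := ((hI4 n k).sub (hI3 n k)).sub (hI2 n k)
    have hh1sm : StronglyMeasurable[ℱ k] h1 := by
      refine Measurable.stronglyMeasurable ?_
      exact ((((hmind n k).mul (hmα k (k + 1) le_rfl)).mul (hθ'ad k).measurable).sub
        (((hmind n k).mul (hmα k (k + 1) le_rfl)).mul (hη'ad k).measurable)).sub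
          (((hmind n k).mul (hmα k k (by omega))).mul (hv'ad k).measurable)
    have hdec : N v' θ' η' χ' n (k + 1) = N v' θ' η' χ' n k + (g1 * v' (k + 1) + h1) := by
      funext ω
      show N v' θ' η' χ' n k ω + ind η' n k ω * _ = _
      simp only [Pi.add_apply, Pi.mul_apply, hg1def, hh1def]
      ring
    have e1 : μ[N v' θ' η' χ' n (k + 1)|ℱ k]
        =ᵐ[μ] μ[N v' θ' η' χ' n k|ℱ k] + μ[g1 * v' (k + 1) + h1|ℱ k] := by
      rw [hdec]
      exact condExp_add (hNint n k) (hg1vint.add hh1int) _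
    have e2 : μ[g1 * v' (k + 1) + h1|ℱ k] =ᵐ[μ] μ[g1 * v' (k + 1)|ℱ k] + μ[h1|ℱ k] :=
      condExp_add hg1vint hh1int _
    have e3 : μ[g1 * v' (k + 1)|ℱ k] =ᵐ[μ] g1 * μ[v' (k + 1)|ℱ k] :=
      condExp_mul_of_stronglyMeasurable_left hg1sm hg1vint (hv'int (k + 1))
    have e4 : μ[h1|ℱ k] = h1 :=
      condExp_of_stronglyMeasurable (ℱ.le k) hh1sm hh1int
    have e5 : μ[N v' θ' η' χ' n k|ℱ k] = N v' θ' η' χ' n k :=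
      condExp_of_stronglyMeasurable (ℱ.le k) (hNad n k) (hNint n k)
    have e6 : μ[v' (k + 1)|ℱ k] =ᵐ[μ] μ[v (k + 1)|ℱ k] := condExp_congr_ae (hv'ae (k + 1))
    filter_upwards [e1, e2, e3, e6, hineq k, hθ_nonneg k, hη_nonneg k, hχ_nonneg k,
      hv_nonneg k] with ω he1 he2 he3 he6 hq h2 h3 h4 h5
    simp only [Pi.zero_apply] at h2 h3 h4 h5
    rw [he1]
    simp only [Pi.add_apply, Pi.mul_apply] at he2 he3 ⊢
    rw [he2, he3, he6, congrFun e4 ω, congrFun e5 ω]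
    have hθe : θ' k ω = θ k ω := max_eq_left h2
    have hηe : η' k ω = η k ω := max_eq_left h3
    have hχe : χ' k ω = χ k ω := max_eq_left h4
    have hve : v' k ω = v k ω := max_eq_left h5
    have hi := hind01 n k ω
    have hA0 := al_pos (fun j => hχ'0 j ω) (k + 1)
    have hAB : al χ' (k + 1) ω * (1 + χ k ω) = al χ' k ω := by
      rw [← hχe]
      exact al_succ_mul k (by linarith [hχ'0 k ω])
    simp only [hg1def, hh1def, hθe, hηe, hve]
    set i := ind η' n k ω
    set A := al χ' (k + 1) ω
    set E := (μ[v (k + 1)|ℱ k]) ω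
    have key : i * A * (E + θ k ω - η k ω - (1 + χ k ω) * v k ω) ≤ 0 := by
      have hfac : E + θ k ω - η k ω - (1 + χ k ω) * v k ω ≤ 0 := by linarith
      have := mul_le_mul_of_nonneg_left hfac (mul_nonneg hi.1 hA0.le)
      simpa using this
    have : i * A * E + (i * A * θ k ω - i * A * η k ω
        - i * (A * (1 + χ k ω)) * v k ω) ≤ 0 := by nlinarith [key]
    rw [← hAB]
    linarith [this]
  have hsm : ∀ n : ℕ, Supermartingale (N v' θ' η' χ' n) ℱ μ := fun n =>
    supermartingale_nat (fun k => hNad n k) (fun k => hNint n k) (fun k => hcondexp n k)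
  have hNge : ∀ (n k : ℕ) ω, -(n : ℝ) ≤ N v' θ' η' χ' n k ω := fun n k ω =>
    N_ge (fun i => hv'0 i ω) (fun i => hθ'0 i ω) (fun i => hη'0 i ω) (fun i => hχ'0 i ω) k
  have hexp : ∀ n k : ℕ, ∫ ω, N v' θ' η' χ' n k ω ∂μ ≤ ∫ ω, v' 0 ω ∂μ := by
    intro n k
    have h := (hsm n).2.1 0 k (Nat.zero_le k)
    calc ∫ ω, N v' θ' η' χ' n k ω ∂μ
        = ∫ ω, (μ[N v' θ' η' χ' n k|ℱ 0]) ω ∂μ := (integral_condExp (ℱ.le 0)).symm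
      _ ≤ ∫ ω, N v' θ' η' χ' n 0 ω ∂μ := integral_mono_ae integrable_condExp (hNint n 0) h
      _ = ∫ ω, v' 0 ω ∂μ := rfl
  have hconv : ∀ n : ℕ, ∀ᵐ ω ∂μ,
      ∃ L, Tendsto (fun k => N v' θ' η' χ' n k ω) atTop (𝓝 L) := by
    intro n
    have hbdd : ∀ k, eLpNorm ((-(N v' θ' η' χ' n)) k) 1 μ
        ≤ ENNReal.ofReal ((∫ ω, v' 0 ω ∂μ) + 2 * n) := by
      intro k
      have hneg : (-(N v' θ' η' χ' n)) k = -(N v' θ' η' χ' n k) := rfl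
      rw [hneg, eLpNorm_neg, eLpNorm_one_eq_lintegral_enorm,
        ← ofReal_integral_norm_eq_lintegral_enorm (hNint n k)]
      refine ENNReal.ofReal_le_ofReal ?_
      have hptw : ∀ ω, ‖N v' θ' η' χ' n k ω‖ ≤ N v' θ' η' χ' n k ω + 2 * n := by
        intro ω
        have := hNge n k ω
        rw [Real.norm_eq_abs]
        rcases abs_cases (N v' θ' η' χ' n k ω) with ⟨h, _⟩ | ⟨h, _⟩ <;> linarith
      calc ∫ ω, ‖N v' θ' η' χ' n k ω‖ ∂μ
          ≤ ∫ ω, (N v' θ' η' χ' n k ω + 2 * n) ∂μ :=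
            integral_mono (hNint n k).norm ((hNint n k).add (integrable_const _))
              hptw
        _ = (∫ ω, N v' θ' η' χ' n k ω ∂μ) + 2 * n := by
            rw [integral_add (hNint n k) (integrable_const _), integral_const,
              probReal_univ, one_smul]
        _ ≤ (∫ ω, v' 0 ω ∂μ) + 2 * n := by linarith [hexp n k]
    have hsub : Submartingale (-(N v' θ' η' χ' n)) ℱ μ := (hsm n).neg
    have htend := hsub.ae_tendsto_limitProcess
      (R := ((∫ ω, v' 0 ω ∂μ) + 2 * n).toNNReal) (fun k => by
        refine le_trans (hbdd k) (le_of_eq ?_)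
        simp [ENNReal.ofReal])
    filter_upwards [htend] with ω hω
    refine ⟨-(ℱ.limitProcess (-(N v' θ' η' χ' n)) μ ω), ?_⟩
    have := hω.neg
    simpa using this
  -- pathwise conclusion
  have hae1v : ∀ᵐ ω ∂μ, ∀ k, 0 ≤ v k ω := ae_all_iff.2 fun k => (hv_nonneg k).mono fun ω h => h
  have hae1θ : ∀ᵐ ω ∂μ, ∀ k, 0 ≤ θ k ω := ae_all_iff.2 fun k => (hθ_nonneg k).mono fun ω h => h
  have hae1η : ∀ᵐ ω ∂μ, ∀ k, 0 ≤ η k ω := ae_all_iff.2 fun k => (hη_nonneg k).mono fun ω h => h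
  have hae1χ : ∀ᵐ ω ∂μ, ∀ k, 0 ≤ χ k ω := ae_all_iff.2 fun k => (hχ_nonneg k).mono fun ω h => h
  have hNall : ∀ᵐ ω ∂μ, ∀ n : ℕ,
      ∃ L, Tendsto (fun k => N v' θ' η' χ' n k ω) atTop (𝓝 L) := ae_all_iff.2 hconv
  have key : ∀ᵐ ω ∂μ, Summable (fun k => θ k ω) ∧
      ∃ A, 0 ≤ A ∧ Tendsto (fun k => v k ω) atTop (𝓝 A) := by
    filter_upwards [hae1v, hae1θ, hae1η, hae1χ, hη_sum, hχ_sum, hNall]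
      with ω hv0 hθ0 hη0 hχ0 hse hsc hN
    have hveq : ∀ k, v' k ω = v k ω := fun k => max_eq_left (hv0 k)
    have hθeq : ∀ k, θ' k ω = θ k ω := fun k => max_eq_left (hθ0 k)
    have hηeq : ∀ k, η' k ω = η k ω := fun k => max_eq_left (hη0 k)
    have hχeq : ∀ k, χ' k ω = χ k ω := fun k => max_eq_left (hχ0 k)
    obtain ⟨n, hn⟩ := exists_nat_ge (∑' k, η k ω)
    have hcnd : ∀ j : ℕ, ∑ i ∈ Finset.range (j + 1), η' i ω ≤ (n : ℝ) := by
      intro j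
      calc ∑ i ∈ Finset.range (j + 1), η' i ω
          = ∑ i ∈ Finset.range (j + 1), η i ω :=
            Finset.sum_congr rfl fun i _ => hηeq i
        _ ≤ ∑' i, η i ω := hse.sum_le_tsum _ (fun i _ => hη0 i)
        _ ≤ (n : ℝ) := hn
    obtain ⟨L, hL⟩ := hN n
    have hL' : Tendsto (fun k => (∏ j ∈ Finset.range k, (1 + χ j ω)⁻¹) * v k ω
        + ∑ j ∈ Finset.range k, (∏ i ∈ Finset.range (j + 1), (1 + χ i ω)⁻¹)
          * (θ j ω - η j ω)) atTop (𝓝 L) := by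
      refine hL.congr fun k => ?_
      rw [N_eq_cl fun j _ => hcnd j]
      simp only [cl, al]
      congr 1
      · congr 1
        · exact Finset.prod_congr rfl fun i _ => by rw [hχeq i]
        · exact hveq k
      · refine Finset.sum_congr rfl fun j _ => ?_
        rw [hθeq j, hηeq j]
        congr 1
        exact Finset.prod_congr rfl fun i _ => by rw [hχeq i]
    exact pathwise hv0 hθ0 hη0 hχ0 hse hsc hL'
  refine ⟨key.mono fun ω h => h.1, ?_⟩
  refine ⟨fun ω => if h : ∃ A, 0 ≤ A ∧ Tendsto (fun k => v k ω) atTop (𝓝 A)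
    then h.choose else 0, key.mono fun ω h => ?_⟩
  simp only []
  rw [dif_pos h.2]
  exact h.2.choose_spec
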